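/- Let K > 0 and let η : ℝ → ℝ be twice differentiable on [0, K] with η(K) = 0, η'(k) ≤ 0 for all k ∈ [0, K] (non-increasing speed-density relation), and k·η''(k) + 2·η'(k) ≤ 0 for all k ∈ [0, K] (concave flow-density relation). Then for any Δt, ΔN > 0, the collision-free condition ΔN/Δt ≥ sup_{k∈[0,K)} k·η(k)/(1 − k/K) holds if and only if the CFL condition ΔN/Δt ≥ max_{k∈[0,K]} |−η'(k)·k²| holds; both are equivalent to ΔN/Δt ≥ −η'(K)·K². -/

import Mathlib

/-!
The flow `φ k = k * η k` has `φ'' = k * η'' + 2 * η' ≤ 0`, so it is concave on `[0, K]`, and it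
vanishes at `K`. Hence the collision-free bound `k * η k / (1 - k / K)` is `-K` times the slope of
the chord of `φ` from `k` to `K`. By concavity these slopes are at least `φ' K = K * η' K`, which
is also their limit as `k → K⁻`, so the supremum is `-η' K * K ^ 2`. Likewise
`(η' k * k ^ 2)' = k * (k * η'' k + 2 * η' k) ≤ 0`, so the CFL quantity `-η' k * k ^ 2 ≥ 0` is
largest at `k = K`.
-/

open Set Filter Topology

section Calculus

variable {f f' : ℝ → ℝ} {a b : ℝ}

theorem antitoneOn_Icc_of_hasDerivWithinAt_nonpos
    (hf : ∀ x ∈ Icc a b, HasDerivWithinAt f (f' x) (Icc a b) x)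
    (hf'₀ : ∀ x ∈ Icc a b, f' x ≤ 0) : AntitoneOn f (Icc a b) := by
  refine antitoneOn_of_hasDerivWithinAt_nonpos (convex_Icc a b)
    (fun x hx => (hf x hx).continuousWithinAt) (fun x hx => ?_)
    (fun x hx => hf'₀ x (interior_subset hx))
  exact (hf x (interior_subset hx)).mono interior_subset

theorem HasDerivWithinAt.id_mul {s : Set ℝ} {x y : ℝ} (hf : HasDerivWithinAt f y s x) :
    HasDerivWithinAt (fun t => t * f t) (f x + x * y) s x := by
  simpa using (hasDerivWithinAt_id x s).fun_mul hf

theorem deriv_le_slope_of_antitoneOn_deriv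
    (hf : ∀ x ∈ Icc a b, HasDerivWithinAt f (f' x) (Icc a b) x)
    (hf' : AntitoneOn f' (Icc a b)) {k : ℝ} (hk : k ∈ Ico a b) :
    f' b ≤ slope f k b := by
  have hb : b ∈ Icc a b := ⟨hk.1.trans hk.2.le, le_rfl⟩
  have hχ : AntitoneOn (fun x => f' b * x - f x) (Icc a b) := by
    refine antitoneOn_Icc_of_hasDerivWithinAt_nonpos (f' := fun x => f' b - f' x)
      (fun x hx => ?_) (fun x hx => sub_nonpos.2 (hf' hx hb hx.2))
    simpa using ((hasDerivWithinAt_id x _).const_mul (f' b)).fun_sub (hf x hx)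
  have hχk := hχ (Ico_subset_Icc_self hk) hb hk.2.le
  rw [slope_def_field, le_div_iff₀ (sub_pos.2 hk.2)]
  linarith

theorem isLUB_image_Ico_of_tendsto {L : ℝ} (hab : a < b) (hle : ∀ x ∈ Ico a b, f x ≤ L)
    (hlim : Tendsto f (𝓝[<] b) (𝓝 L)) : IsLUB (f '' Ico a b) L := by
  refine isLUB_of_mem_closure (forall_mem_image.2 hle) (mem_closure_of_tendsto hlim ?_)
  rw [← nhdsWithin_Ico_eq_nhdsLT hab]
  filter_upwards [self_mem_nhdsWithin] with x hx using mem_image_of_mem f hx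

end Calculus

section FundamentalDiagram

variable {K : ℝ} {η η' η'' : ℝ → ℝ}

theorem collisionFree_eq_neg_mul_slope (hK : 0 < K) (hηK : η K = 0) {k : ℝ} (hk : k < K) :
    k * η k / (1 - k / K) = -K * slope (fun x => x * η x) K k := by
  have hKk : K - k ≠ 0 := sub_ne_zero.2 hk.ne'
  have hkK : k - K ≠ 0 := sub_ne_zero.2 hk.ne
  rw [slope_def_field, hηK, mul_zero, sub_zero, one_sub_div hK.ne']
  field_simp
  ring

theorem isLUB_collisionFree (hK : 0 < K)
    (hd1 : ∀ k ∈ Icc 0 K, HasDerivWithinAt η (η' k) (Icc 0 K) k)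
    (hd2 : ∀ k ∈ Icc 0 K, HasDerivWithinAt η' (η'' k) (Icc 0 K) k) (hηK : η K = 0)
    (hconc : ∀ k ∈ Icc 0 K, k * η'' k + 2 * η' k ≤ 0) :
    IsLUB ((fun k => k * η k / (1 - k / K)) '' Ico 0 K) (-η' K * K ^ 2) := by
  set φ : ℝ → ℝ := fun x => x * η x
  set p : ℝ → ℝ := fun x => η x + x * η' x
  have hKmem : K ∈ Icc 0 K := right_mem_Icc.2 hK.le
  have hφ : ∀ x ∈ Icc 0 K, HasDerivWithinAt φ (p x) (Icc 0 K) x := fun x hx => (hd1 x hx).id_mul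
  have hp : ∀ x ∈ Icc 0 K, HasDerivWithinAt p (x * η'' x + 2 * η' x) (Icc 0 K) x := fun x hx =>
    ((hd1 x hx).add (hd2 x hx).id_mul).congr_deriv (by ring)
  have hpK : -K * p K = -η' K * K ^ 2 := by simp only [p, hηK]; ring
  rw [← hpK]
  refine isLUB_image_Ico_of_tendsto hK (fun k hk => ?_) ?_
  · rw [collisionFree_eq_neg_mul_slope hK hηK hk.2, slope_comm]
    have hpanti := antitoneOn_Icc_of_hasDerivWithinAt_nonpos hp hconc
    exact mul_le_mul_of_nonpos_left (deriv_le_slope_of_antitoneOn_deriv hφ hpanti hk)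
      (neg_nonpos.2 hK.le)
  · have hslope := (hasDerivWithinAt_iff_tendsto_slope.1 (hφ K hKmem)).const_mul (-K)
    rw [Icc_sdiff_right, nhdsWithin_Ico_eq_nhdsLT hK] at hslope
    refine hslope.congr' ?_
    filter_upwards [self_mem_nhdsWithin] with k hk
    exact (collisionFree_eq_neg_mul_slope hK hηK hk).symm

theorem neg_mul_sq_le_of_concave (hd2 : ∀ k ∈ Icc 0 K, HasDerivWithinAt η' (η'' k) (Icc 0 K) k)
    (hconc : ∀ k ∈ Icc 0 K, k * η'' k + 2 * η' k ≤ 0) {k : ℝ} (hk : k ∈ Icc 0 K) :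
    -η' k * k ^ 2 ≤ -η' K * K ^ 2 := by
  have hanti : AntitoneOn (fun x => η' x * x ^ 2) (Icc 0 K) := by
    refine antitoneOn_Icc_of_hasDerivWithinAt_nonpos
      (f' := fun x => x * (x * η'' x + 2 * η' x)) (fun x hx => ?_) (fun x hx => ?_)
    · exact ((hd2 x hx).fun_mul (hasDerivWithinAt_pow 2 x)).congr_deriv (by ring)
    · exact mul_nonpos_of_nonneg_of_nonpos hx.1 (hconc x hx)
  linarith [hanti hk (right_mem_Icc.2 (hk.1.trans hk.2)) hk.2]

end FundamentalDiagram

theorem collision_free_iff_cfl_general (K ΔN Δt : ℝ) (hK : 0 < K)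
    (η η' η'' : ℝ → ℝ)
    (hd1 : ∀ k ∈ Set.Icc (0 : ℝ) K, HasDerivWithinAt η (η' k) (Set.Icc (0 : ℝ) K) k)
    (hd2 : ∀ k ∈ Set.Icc (0 : ℝ) K, HasDerivWithinAt η' (η'' k) (Set.Icc (0 : ℝ) K) k)
    (hηK : η K = 0)
    (hmono : ∀ k ∈ Set.Icc (0 : ℝ) K, η' k ≤ 0)
    (hconc : ∀ k ∈ Set.Icc (0 : ℝ) K, k * η'' k + 2 * η' k ≤ 0) :
    (ΔN / Δt ≥ sSup ((fun k => k * η k / (1 - k / K)) '' Set.Ico (0 : ℝ) K) ↔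
      (∀ k ∈ Set.Icc (0 : ℝ) K, |(-(η' k) * k ^ 2)| ≤ ΔN / Δt)) ∧
    (ΔN / Δt ≥ sSup ((fun k => k * η k / (1 - k / K)) '' Set.Ico (0 : ℝ) K) ↔
      ΔN / Δt ≥ -η' K * K ^ 2) := by
  have hsup := (isLUB_collisionFree hK hd1 hd2 hηK hconc).csSup_eq
    ⟨_, mem_image_of_mem _ (left_mem_Ico.2 hK)⟩
  have habs : ∀ k ∈ Icc 0 K, |(-(η' k) * k ^ 2)| = -η' k * k ^ 2 := fun k hk =>
    abs_of_nonneg (mul_nonneg (neg_nonneg.2 (hmono k hk)) (sq_nonneg k))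
  rw [hsup]
  refine ⟨⟨fun h k hk => ?_, fun h => ?_⟩, Iff.rfl⟩
  · rw [habs k hk]
    exact (neg_mul_sq_le_of_concave hd2 hconc hk).trans h
  · have hKmem : K ∈ Icc 0 K := right_mem_Icc.2 hK.le
    simpa only [habs K hKmem] using h K hKmem

/-- Equivalence of the collision-free and CFL conditions for a nonincreasing
speed-density relation and a concave flow-density relation: both are equivalent to
`ΔN/Δt ≥ −η'(K)·K²`. -/
theorem collision_free_iff_cfl (K ΔN Δt : ℝ) (hK : 0 < K)
    (hΔN : 0 < ΔN) (hΔt : 0 < Δt) (η η' η'' : ℝ → ℝ)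
    (hd1 : ∀ k ∈ Set.Icc (0 : ℝ) K, HasDerivWithinAt η (η' k) (Set.Icc (0 : ℝ) K) k)
    (hd2 : ∀ k ∈ Set.Icc (0 : ℝ) K, HasDerivWithinAt η' (η'' k) (Set.Icc (0 : ℝ) K) k)
    (hηK : η K = 0)
    (hmono : ∀ k ∈ Set.Icc (0 : ℝ) K, η' k ≤ 0)
    (hconc : ∀ k ∈ Set.Icc (0 : ℝ) K, k * η'' k + 2 * η' k ≤ 0) :
    (ΔN / Δt ≥ sSup ((fun k => k * η k / (1 - k / K)) '' Set.Ico (0 : ℝ) K) ↔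
      (∀ k ∈ Set.Icc (0 : ℝ) K, |(-(η' k) * k ^ 2)| ≤ ΔN / Δt)) ∧
    (ΔN / Δt ≥ sSup ((fun k => k * η k / (1 - k / K)) '' Set.Ico (0 : ℝ) K) ↔
      ΔN / Δt ≥ -η' K * K ^ 2) :=
  collision_free_iff_cfl_general K ΔN Δt hK η η' η'' hd1 hd2 hηK hmono hconc
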